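/- Let Φ : ℝ^N → ℝ^m be a linear map, let 1 ≤ p < ∞, let s be a positive integer with s ≤ N, let μ > 0 and 0 ≤ δ < 1/3, and suppose ‖Φz‖_{ℓp} ≤ μ(1+δ)‖z‖_{ℓ2} for every z ∈ ℝ^N with at most s nonzero entries. Let x ∈ ℝ^N satisfy ‖Φx‖_{ℓp} < (1/3 − δ)μ‖x‖_{ℓ2} and ‖x‖_{ℓ2} > (3/√s)‖x‖_{ℓ1}, and let S ⊆ {1,…,N} be a set of indices of the s largest-in-absolute-value entries of x (|S| = s and |x_j| ≤ |x_i| for every i ∈ S, j ∉ S). Then ‖x‖_{ℓ2} < (3/2)‖x_S‖_{ℓ2} and ‖Φx_S‖_{ℓp} < (1 − δ)μ‖x_S‖_{ℓ2}. -/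

import Mathlib

/-!
Put `z = x_{Sᶜ}`. Each entry of `z` is at most the average `‖x_S‖₁ / s` of the entries on `S`,
so `2√s ‖z‖₂ ≤ ‖x_S‖₁ + ‖z‖₁ = ‖x‖₁ < √s ‖x‖₂ / 3`, whence `‖x_S‖₂² > (35/36) ‖x‖₂²`.
Cutting `z` into consecutive blocks of its `s` largest entries and applying the upper RIP bound
to each block gives `‖Φz‖_p ≤ μ(1+δ) ‖x‖₁ / √s < μ(1+δ) ‖x‖₂ / 3`, and then
`‖Φx_S‖_p ≤ ‖Φx‖_p + ‖Φz‖_p < (2/3)(1-δ) μ ‖x‖₂ < (1-δ) μ ‖x_S‖₂`.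
-/

open Finset

/-- The ℓp norm of a vector in ℝ^m, for real `p`. -/
noncomputable def lpNorm {m : ℕ} (p : ℝ) (u : Fin m → ℝ) : ℝ :=
  (∑ i, |u i| ^ p) ^ (1 / p)

/-- The ℓ1 norm of a vector in ℝ^N. -/
noncomputable def l1Norm {N : ℕ} (v : Fin N → ℝ) : ℝ :=
  ∑ j, |v j|

/-- The ℓ2 norm of a vector in ℝ^N. -/
noncomputable def l2Norm {N : ℕ} (v : Fin N → ℝ) : ℝ :=
  Real.sqrt (∑ j, (v j) ^ 2)

/-- The restriction of a vector to a set of coordinates (zero outside the set). -/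
def restrictVec {N : ℕ} (S : Finset (Fin N)) (v : Fin N → ℝ) : Fin N → ℝ :=
  fun j => if j ∈ S then v j else 0

lemma l1Norm_nonneg {N : ℕ} (v : Fin N → ℝ) : 0 ≤ l1Norm v :=
  sum_nonneg fun _ _ => abs_nonneg _

lemma l2Norm_nonneg {N : ℕ} (v : Fin N → ℝ) : 0 ≤ l2Norm v := Real.sqrt_nonneg _

lemma sq_l2Norm {N : ℕ} (v : Fin N → ℝ) : l2Norm v ^ 2 = ∑ j, v j ^ 2 :=
  Real.sq_sqrt (sum_nonneg fun _ _ => sq_nonneg _)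

lemma lpNorm_add_le {m : ℕ} {p : ℝ} (hp : 1 ≤ p) (u v : Fin m → ℝ) :
    lpNorm p (u + v) ≤ lpNorm p u + lpNorm p v := by
  simpa [lpNorm] using Real.Lp_add_le univ u v hp

lemma lpNorm_neg {m : ℕ} (p : ℝ) (u : Fin m → ℝ) : lpNorm p (-u) = lpNorm p u := by
  simp [lpNorm]

lemma lpNorm_sub_le {m : ℕ} {p : ℝ} (hp : 1 ≤ p) (u v : Fin m → ℝ) :
    lpNorm p (u - v) ≤ lpNorm p u + lpNorm p v := by
  simpa [sub_eq_add_neg, lpNorm_neg] using lpNorm_add_le hp u (-v)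

section restrictVec

variable {N : ℕ} (S : Finset (Fin N)) (v : Fin N → ℝ)

lemma abs_restrictVec_le (j : Fin N) : |restrictVec S v j| ≤ |v j| := by
  unfold restrictVec; split_ifs <;> simp

lemma restrictVec_add_restrictVec_compl : restrictVec S v + restrictVec Sᶜ v = v := by
  ext j; by_cases h : j ∈ S <;> simp [restrictVec, h]

lemma l1Norm_restrictVec_add_compl :
    l1Norm (restrictVec S v) + l1Norm (restrictVec Sᶜ v) = l1Norm v := by
  simp only [l1Norm, ← sum_add_distrib]
  refine sum_congr rfl fun j _ => ?_
  by_cases h : j ∈ S <;> simp [restrictVec, h]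

lemma sq_l2Norm_restrictVec_add_compl :
    l2Norm (restrictVec S v) ^ 2 + l2Norm (restrictVec Sᶜ v) ^ 2 = l2Norm v ^ 2 := by
  simp only [sq_l2Norm, ← sum_add_distrib]
  refine sum_congr rfl fun j _ => ?_
  by_cases h : j ∈ S <;> simp [restrictVec, h]

lemma ncard_support_restrictVec_le : {j | restrictVec S v j ≠ 0}.ncard ≤ S.card := by
  rw [← Set.ncard_coe_finset]
  refine Set.ncard_le_ncard fun j hj => ?_
  by_contra h
  simp_all [restrictVec]

variable {S v}

lemma card_mul_abs_restrictVec_compl_le (hS : ∀ i ∈ S, ∀ j ∉ S, |v j| ≤ |v i|) (j : Fin N) :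
    S.card * |restrictVec Sᶜ v j| ≤ l1Norm (restrictVec S v) := by
  by_cases hj : j ∈ S
  · simpa [restrictVec, hj] using l1Norm_nonneg (restrictVec S v)
  · calc S.card * |restrictVec Sᶜ v j| = ∑ _i ∈ S, |v j| := by simp [restrictVec, hj]
      _ ≤ ∑ i ∈ S, |v i| := sum_le_sum fun i hi => hS i hi j hj
      _ = l1Norm (restrictVec S v) := by
        rw [l1Norm, ← sum_subset (subset_univ S) fun i _ hi => by simp [restrictVec, hi]]
        exact sum_congr rfl fun i hi => by simp [restrictVec, hi]

lemma ncard_support_restrictVec_compl_lt (hS : ∀ i ∈ S, ∀ j ∉ S, |v j| ≤ |v i|)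
    (hne : S.Nonempty) (hsupp : S.card < {j | v j ≠ 0}.ncard) :
    {j | restrictVec Sᶜ v j ≠ 0}.ncard < {j | v j ≠ 0}.ncard := by
  obtain ⟨i, hi⟩ := hne
  have hvi : v i ≠ 0 := by
    intro h0
    have hsub : {j | v j ≠ 0} ⊆ S := fun j hj => by
      by_contra hjS
      exact hj (abs_nonpos_iff.mp ((hS i hi j hjS).trans_eq (by simp [h0])))
    exact hsupp.not_ge (by simpa using Set.ncard_le_ncard hsub)
  refine Set.ncard_lt_ncard (Set.ssubset_iff_of_subset (fun j hj => ?_) |>.2 ⟨i, hvi, ?_⟩)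
  · by_cases h : j ∈ S <;> simp_all [restrictVec]
  · simp [restrictVec, hi]

end restrictVec

lemma exists_finset_card_eq_forall_le {ι α : Type*} [Fintype ι] [LinearOrder α] (f : ι → α)
    {k : ℕ} (hk : k ≤ Fintype.card ι) :
    ∃ T : Finset ι, T.card = k ∧ ∀ i ∈ T, ∀ j ∉ T, f j ≤ f i := by
  classical
  induction k with
  | zero => exact ⟨∅, rfl, by simp⟩
  | succ k ih =>
    obtain ⟨T, hTcard, hT⟩ := ih (by omega)
    have hne : Tᶜ.Nonempty := by
      rw [← card_pos, card_compl, hTcard]; omega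
    obtain ⟨j₀, hj₀, hmax⟩ := exists_max_image Tᶜ f hne
    have hj₀T : j₀ ∉ T := mem_compl.mp hj₀
    refine ⟨insert j₀ T, by rw [card_insert_of_notMem hj₀T, hTcard], fun i hi j hj => ?_⟩
    have hjT : j ∉ T := fun h => hj (mem_insert_of_mem h)
    rcases mem_insert.mp hi with rfl | hiT
    · exact hmax j (mem_compl.mpr hjT)
    · exact hT i hiT j hjT

section l2Norm

variable {N : ℕ} {z : Fin N → ℝ} {s σ : ℝ}

lemma mul_sq_l2Norm_le (hz : ∀ j, s * |z j| ≤ σ) : s * l2Norm z ^ 2 ≤ σ * l1Norm z := by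
  rw [sq_l2Norm, l1Norm, mul_sum, mul_sum]
  refine sum_le_sum fun j _ => ?_
  calc s * z j ^ 2 = s * |z j| * |z j| := by rw [mul_assoc, ← sq, sq_abs]
    _ ≤ σ * |z j| := mul_le_mul_of_nonneg_right (hz j) (abs_nonneg _)

/-- The AM-GM form of `‖z‖₂² ≤ ‖z‖_∞ ‖z‖₁`. -/
lemma two_sqrt_mul_l2Norm_le (hs : 0 ≤ s) (hσ : 0 ≤ σ) (hz : ∀ j, s * |z j| ≤ σ) :
    2 * √s * l2Norm z ≤ σ + l1Norm z := by
  have hl1 := l1Norm_nonneg z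
  have hl2 := l2Norm_nonneg z
  refine (pow_le_pow_iff_left₀ (by positivity) (by positivity) two_ne_zero).mp ?_
  calc (2 * √s * l2Norm z) ^ 2 = 4 * (s * l2Norm z ^ 2) := by
        rw [mul_pow, mul_pow, Real.sq_sqrt hs]; ring
    _ ≤ 4 * (σ * l1Norm z) := mul_le_mul_of_nonneg_left (mul_sq_l2Norm_le hz) (by norm_num)
    _ ≤ (σ + l1Norm z) ^ 2 := by nlinarith [sq_nonneg (σ - l1Norm z)]

end l2Norm

lemma two_sqrt_mul_l2Norm_restrictVec_compl_le {N : ℕ} {S : Finset (Fin N)} {x : Fin N → ℝ}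
    (hS : ∀ i ∈ S, ∀ j ∉ S, |x j| ≤ |x i|) :
    2 * √S.card * l2Norm (restrictVec Sᶜ x) ≤ l1Norm x := by
  rw [← l1Norm_restrictVec_add_compl S x]
  exact two_sqrt_mul_l2Norm_le (Nat.cast_nonneg _) (l1Norm_nonneg _)
    (card_mul_abs_restrictVec_compl_le hS)

section RIP

variable {N m : ℕ} (Φ : (Fin N → ℝ) →ₗ[ℝ] (Fin m → ℝ)) {p C : ℝ} {s : ℕ}

lemma two_sqrt_mul_lpNorm_le_of_ncard_le (hC : 0 ≤ C)
    (hRIP : ∀ z : Fin N → ℝ, {j | z j ≠ 0}.ncard ≤ s → lpNorm p (Φ z) ≤ C * l2Norm z)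
    {z : Fin N → ℝ} {σ : ℝ} (hσ : 0 ≤ σ) (hz : ∀ j, s * |z j| ≤ σ)
    (hsparse : {j | z j ≠ 0}.ncard ≤ s) :
    2 * √s * lpNorm p (Φ z) ≤ C * (σ + l1Norm z) :=
  calc 2 * √s * lpNorm p (Φ z) ≤ 2 * √s * (C * l2Norm z) := by gcongr; exact hRIP z hsparse
    _ = C * (2 * √s * l2Norm z) := by ring
    _ ≤ C * (σ + l1Norm z) := by gcongr; exact two_sqrt_mul_l2Norm_le s.cast_nonneg hσ hz

/-- Peeling off the `s` largest entries of `z` leaves an `s`-sparse vector and a remainder whose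
entries are bounded by their average, so induction on the size of the support applies. -/
lemma two_sqrt_mul_lpNorm_le (hp : 1 ≤ p) (hs : 0 < s) (hC : 0 ≤ C)
    (hRIP : ∀ z : Fin N → ℝ, {j | z j ≠ 0}.ncard ≤ s → lpNorm p (Φ z) ≤ C * l2Norm z)
    (z : Fin N → ℝ) {σ : ℝ} (hσ : 0 ≤ σ) (hz : ∀ j, s * |z j| ≤ σ) :
    2 * √s * lpNorm p (Φ z) ≤ C * (σ + 2 * l1Norm z) := by
  induction hn : {j | z j ≠ 0}.ncard using Nat.strong_induction_on generalizing z σ with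
  | _ n ih =>
  have hCl1 := mul_nonneg hC (l1Norm_nonneg z)
  by_cases hsparse : n ≤ s
  · linarith [two_sqrt_mul_lpNorm_le_of_ncard_le Φ hC hRIP hσ hz (hn ▸ hsparse)]
  have hsN : s ≤ Fintype.card (Fin N) := by
    have := Set.ncard_le_card {j | z j ≠ 0}
    simp only [Nat.card_eq_fintype_card] at this
    omega
  obtain ⟨T, hTcard, hT⟩ := exists_finset_card_eq_forall_le (fun j => |z j|) hsN
  subst hTcard
  have hhead := two_sqrt_mul_lpNorm_le_of_ncard_le Φ hC hRIP hσ
    (fun j => (mul_le_mul_of_nonneg_left (abs_restrictVec_le T z j) (by positivity)).trans (hz j))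
    (ncard_support_restrictVec_le T z)
  have htail := ih _ (hn ▸ ncard_support_restrictVec_compl_lt hT
    (card_pos.mp hs) (by omega)) (restrictVec Tᶜ z) (l1Norm_nonneg _)
    (card_mul_abs_restrictVec_compl_le hT) rfl
  have hsplit : lpNorm p (Φ z) ≤
      lpNorm p (Φ (restrictVec T z)) + lpNorm p (Φ (restrictVec Tᶜ z)) := by
    conv_lhs => rw [← restrictVec_add_restrictVec_compl T z, map_add]
    exact lpNorm_add_le hp _ _
  calc 2 * √T.card * lpNorm p (Φ z)
      ≤ 2 * √T.card * lpNorm p (Φ (restrictVec T z))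
        + 2 * √T.card * lpNorm p (Φ (restrictVec Tᶜ z)) := by
        rw [← mul_add]; gcongr
    _ ≤ C * (σ + 2 * l1Norm z) := by
        rw [← l1Norm_restrictVec_add_compl T z]; linarith

lemma sqrt_mul_lpNorm_restrictVec_compl_le (hp : 1 ≤ p) (hs : 0 < s) (hC : 0 ≤ C)
    (hRIP : ∀ z : Fin N → ℝ, {j | z j ≠ 0}.ncard ≤ s → lpNorm p (Φ z) ≤ C * l2Norm z)
    {S : Finset (Fin N)} (hScard : S.card = s) {x : Fin N → ℝ}
    (hS : ∀ i ∈ S, ∀ j ∉ S, |x j| ≤ |x i|) :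
    √s * lpNorm p (Φ (restrictVec Sᶜ x)) ≤ C * l1Norm x := by
  subst hScard
  have := two_sqrt_mul_lpNorm_le Φ hp hs hC hRIP (restrictVec Sᶜ x) (l1Norm_nonneg _)
    (card_mul_abs_restrictVec_compl_le hS)
  rw [← l1Norm_restrictVec_add_compl S x]
  nlinarith [mul_nonneg hC (l1Norm_nonneg (restrictVec S x))]

end RIP

theorem rip_rwp_key_estimates_general
    {N m : ℕ} (Φ : (Fin N → ℝ) →ₗ[ℝ] (Fin m → ℝ))
    (p : ℝ) (hp : 1 ≤ p)
    (s : ℕ) (hs : 0 < s)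
    (μ δ : ℝ) (hμ : 0 < μ) (hδ0 : 0 ≤ δ) (hδ : δ < 1 / 3)
    (hRIPupper : ∀ z : Fin N → ℝ, {j | z j ≠ 0}.ncard ≤ s →
      lpNorm p (Φ z) ≤ μ * (1 + δ) * l2Norm z)
    (x : Fin N → ℝ)
    (hΦx : lpNorm p (Φ x) < (1 / 3 - δ) * μ * l2Norm x)
    (hx : l2Norm x > (3 / Real.sqrt s) * l1Norm x)
    (S : Finset (Fin N)) (hScard : S.card = s)
    (hSmax : ∀ i ∈ S, ∀ j ∉ S, |x j| ≤ |x i|) :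
    l2Norm x < (3 / 2) * l2Norm (restrictVec S x) ∧
    lpNorm p (Φ (restrictVec S x)) < (1 - δ) * μ * l2Norm (restrictVec S x) := by
  set xS := restrictVec S x
  set z := restrictVec Sᶜ x
  have hsqrt : 0 < √(s : ℝ) := Real.sqrt_pos.mpr (by exact_mod_cast hs)
  have hx' : 3 * l1Norm x < √s * l2Norm x := by
    rw [gt_iff_lt, div_mul_eq_mul_div, div_lt_iff₀ hsqrt] at hx; linarith
  have hC : 0 ≤ μ * (1 + δ) := by positivity
  have hzl2 : 6 * l2Norm z < l2Norm x := by
    nlinarith [hScard ▸ two_sqrt_mul_l2Norm_restrictVec_compl_le hSmax]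
  have hΦz : 3 * lpNorm p (Φ z) ≤ μ * (1 + δ) * l2Norm x := by
    refine le_of_mul_le_mul_left ?_ hsqrt
    nlinarith [sqrt_mul_lpNorm_restrictVec_compl_le Φ hp hs hC hRIPupper hScard hSmax,
      mul_le_mul_of_nonneg_left hx'.le hC]
  have hA : l2Norm x < 3 / 2 * l2Norm xS := by
    nlinarith [sq_l2Norm_restrictVec_add_compl S x, l2Norm_nonneg xS, l2Norm_nonneg z]
  refine ⟨hA, ?_⟩
  have hsplit : lpNorm p (Φ xS) ≤ lpNorm p (Φ x) + lpNorm p (Φ z) := by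
    have hxS : xS = x - z := eq_sub_of_add_eq (restrictVec_add_restrictVec_compl S x)
    rw [hxS, map_sub]
    exact lpNorm_sub_le hp _ _
  have hcoef : 0 < (1 - δ) * μ := by nlinarith
  linarith [mul_lt_mul_of_pos_left hA hcoef]

/-- The key estimates in the proof of Theorem 3: if Φ satisfies the upper RIP_{p,2}
inequality and x violates the robust width conclusion while ‖Φx‖_{ℓp} is small, then
‖x‖₂ < (3/2)‖x_S‖₂ and ‖Φ x_S‖_{ℓp} < (1 − δ)μ‖x_S‖₂. -/
theorem rip_rwp_key_estimates
    {N m : ℕ} (Φ : (Fin N → ℝ) →ₗ[ℝ] (Fin m → ℝ))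
    (p : ℝ) (hp : 1 ≤ p)
    (s : ℕ) (hs : 0 < s) (hsN : s ≤ N)
    (μ δ : ℝ) (hμ : 0 < μ) (hδ0 : 0 ≤ δ) (hδ : δ < 1 / 3)
    (hRIPupper : ∀ z : Fin N → ℝ, {j | z j ≠ 0}.ncard ≤ s →
      lpNorm p (Φ z) ≤ μ * (1 + δ) * l2Norm z)
    (x : Fin N → ℝ)
    (hΦx : lpNorm p (Φ x) < (1 / 3 - δ) * μ * l2Norm x)
    (hx : l2Norm x > (3 / Real.sqrt s) * l1Norm x)
    (S : Finset (Fin N)) (hScard : S.card = s)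
    (hSmax : ∀ i ∈ S, ∀ j ∉ S, |x j| ≤ |x i|) :
    l2Norm x < (3 / 2) * l2Norm (restrictVec S x) ∧
    lpNorm p (Φ (restrictVec S x)) < (1 - δ) * μ * l2Norm (restrictVec S x) :=
  rip_rwp_key_estimates_general Φ p hp s hs μ δ hμ hδ0 hδ hRIPupper x hΦx hx S hScard hSmax
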